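/- arXiv:1111.0476 — 4 statements merged into one kernel-verified Lean document; each statement's English description precedes it below -/
import Mathlib

section
/- Let X be a compact topological space and let 𝓜 be a collection of clopen subsets of X containing ∅ and X and closed under binary unions and binary intersections (a sublattice of the clopen algebra). Then there exists a set E ⊆ X × X of 'equations' such that a clopen set A ⊆ X belongs to 𝓜 if and only if for every (u,v) ∈ E, u ∈ A implies v ∈ A. -/
/-!
The equations are all pairs `(u, v)` such that every member of `𝓜` containing `u` contains `v`.
If a clopen set `A` satisfies them, then for `u ∈ A` the members of `𝓜` through `u` form a
family of closed sets, directed under intersection, whose intersection misses the compact set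
`Aᶜ`; by compactness a single one of them does, so `u` has a neighbourhood in `𝓜` inside `A`.
These neighbourhoods form an open cover of the compact set `A`, and the members of `𝓜` inside
`A` are directed under union, so one of them is all of `A`.
-/

open Set

section

variable {X : Type*} [TopologicalSpace X] {S : Set (Set X)} {K : Set X}

def validEquations (S : Set (Set X)) : Set (X × X) :=
  {p | ∀ B ∈ S, p.1 ∈ B → p.2 ∈ B}

theorem IsCompact.exists_mem_disjoint_of_separated (hK : IsCompact K)
    (hS : ∀ B ∈ S, IsClosed B) (huniv : univ ∈ S) (hinter : ∀ A ∈ S, ∀ B ∈ S, A ∩ B ∈ S)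
    {u : X} (hsep : ∀ v ∈ K, ∃ B ∈ S, u ∈ B ∧ v ∉ B) :
    ∃ B ∈ S, u ∈ B ∧ Disjoint B K := by
  have : Nonempty {B // B ∈ S ∧ u ∈ B} := ⟨⟨univ, huniv, mem_univ u⟩⟩
  have hmiss : K ∩ ⋂ B : {B // B ∈ S ∧ u ∈ B}, B.1 = ∅ := by
    refine eq_empty_of_forall_notMem fun v ⟨hvK, hv⟩ => ?_
    obtain ⟨B, hB, huB, hvB⟩ := hsep v hvK
    exact hvB (mem_iInter.mp hv ⟨B, hB, huB⟩)
  have hdir : Directed (· ⊇ ·) fun B : {B // B ∈ S ∧ u ∈ B} => B.1 := fun B C =>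
    ⟨⟨B.1 ∩ C.1, hinter _ B.2.1 _ C.2.1, B.2.2, C.2.2⟩, inter_subset_left, inter_subset_right⟩
  obtain ⟨B, hB⟩ := hK.elim_directed_family_closed _ (fun B => hS _ B.2.1) hmiss hdir
  exact ⟨B.1, B.2.1, B.2.2, (disjoint_iff_inter_eq_empty.mpr hB).symm⟩

theorem IsCompact.mem_of_forall_exists_mem_subset (hK : IsCompact K)
    (hS : ∀ B ∈ S, IsOpen B) (hempty : ∅ ∈ S) (hunion : ∀ A ∈ S, ∀ B ∈ S, A ∪ B ∈ S)
    (hloc : ∀ u ∈ K, ∃ B ∈ S, u ∈ B ∧ B ⊆ K) : K ∈ S := by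
  have : Nonempty {B // B ∈ S ∧ B ⊆ K} := ⟨⟨∅, hempty, empty_subset K⟩⟩
  have hcover : K ⊆ ⋃ B : {B // B ∈ S ∧ B ⊆ K}, B.1 := fun u hu =>
    let ⟨B, hB, huB, hBK⟩ := hloc u hu
    mem_iUnion.mpr ⟨⟨B, hB, hBK⟩, huB⟩
  have hdir : Directed (· ⊆ ·) fun B : {B // B ∈ S ∧ B ⊆ K} => B.1 := fun B C =>
    ⟨⟨B.1 ∪ C.1, hunion _ B.2.1 _ C.2.1, union_subset B.2.2 C.2.2⟩,
      subset_union_left, subset_union_right⟩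
  obtain ⟨B, hKB⟩ := hK.elim_directed_cover _ (fun B => hS _ B.2.1) hcover hdir
  exact (B.2.2.antisymm hKB) ▸ B.2.1

end

theorem stmt_0 {X : Type*} [TopologicalSpace X] [CompactSpace X]
    (𝓜 : Set (Set X)) (hcl : ∀ A ∈ 𝓜, IsClopen A)
    (h0 : ∅ ∈ 𝓜) (h1 : Set.univ ∈ 𝓜)
    (hu : ∀ A ∈ 𝓜, ∀ B ∈ 𝓜, A ∪ B ∈ 𝓜)
    (hi : ∀ A ∈ 𝓜, ∀ B ∈ 𝓜, A ∩ B ∈ 𝓜) :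
    ∃ E : Set (X × X), ∀ A : Set X, IsClopen A →
      (A ∈ 𝓜 ↔ ∀ p ∈ E, p.1 ∈ A → p.2 ∈ A) := by
  refine ⟨validEquations 𝓜, fun A hA => ⟨fun hAM p hp => hp A hAM, fun hE => ?_⟩⟩
  have hloc : ∀ u ∈ A, ∃ B ∈ 𝓜, u ∈ B ∧ B ⊆ A := by
    intro u huA
    have hsep : ∀ v ∈ Aᶜ, ∃ B ∈ 𝓜, u ∈ B ∧ v ∉ B := by
      intro v hvA
      by_contra! hv
      exact hvA (hE (u, v) hv huA)
    obtain ⟨B, hB, huB, hBA⟩ :=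
      hA.isOpen.isClosed_compl.isCompact.exists_mem_disjoint_of_separated
        (fun B hB => (hcl B hB).isClosed) h1 hi hsep
    exact ⟨B, hB, huB, disjoint_compl_right_iff_subset.mp hBA⟩
  exact hA.isClosed.isCompact.mem_of_forall_exists_mem_subset
    (fun B hB => (hcl B hB).isOpen) h0 hu hloc
end

section
/- Let X be a compact topological space and let 𝓜 be a collection of clopen subsets of X containing ∅ and X and closed under binary unions, binary intersections, and complementation (a Boolean subalgebra of the clopen algebra). Then there exists a symmetric set E ⊆ X × X (i.e., (u,v) ∈ E implies (v,u) ∈ E) such that a clopen set A belongs to 𝓜 if and only if for every (u,v) ∈ E, u ∈ A implies v ∈ A. -/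
/-! Take for `E` the relation "no member of `𝓜` separates `u` from `v`". If a clopen `A`
respects `E`, then for `u ∈ A` every `v ∉ A` is separated from `u` by a member of `𝓜`;
compactness of `Aᶜ` yields finitely many such members, whose union's complement lies in `𝓜`
and fits between `u` and `A`. Compactness of `A` then writes `A` as a finite union of members. -/

open Set

theorem IsCompact.exists_mem_between_of_supClosed {X : Type*} [TopologicalSpace X]
    {𝓜 : Set (Set X)} (hopen : ∀ B ∈ 𝓜, IsOpen B) (h0 : ∅ ∈ 𝓜) (hsup : SupClosed 𝓜)
    {K U : Set X} (hK : IsCompact K) (hloc : ∀ x ∈ K, ∃ B ∈ 𝓜, x ∈ B ∧ B ⊆ U) :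
    ∃ B ∈ 𝓜, K ⊆ B ∧ B ⊆ U := by
  let 𝓑 : Set (Set X) := 𝓜 ∩ Iic U
  have : Nonempty 𝓑 := ⟨⟨∅, h0, empty_subset U⟩⟩
  obtain ⟨⟨B, hB𝓜, hBU⟩, hKB⟩ := hK.elim_directed_cover (Subtype.val : 𝓑 → Set X)
    (fun B => hopen B B.2.1)
    (fun x hx => by
      obtain ⟨B, hB𝓜, hxB, hBU⟩ := hloc x hx
      exact mem_iUnion.2 ⟨⟨B, hB𝓜, hBU⟩, hxB⟩)
    fun B B' => ⟨⟨B ∪ B', hsup B.2.1 B'.2.1, union_subset B.2.2 B'.2.2⟩,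
      subset_union_left, subset_union_right⟩
  exact ⟨B, hB𝓜, hKB, hBU⟩

theorem exists_mem_separating_of_compl_mem {X : Type*} {𝓜 : Set (Set X)}
    (hc : ∀ A ∈ 𝓜, Aᶜ ∈ 𝓜) {u v : X} (h : ¬ ∀ B ∈ 𝓜, u ∈ B ↔ v ∈ B) :
    ∃ D ∈ 𝓜, v ∈ D ∧ u ∉ D := by
  push Not at h
  obtain ⟨B, hB, ⟨hu, hv⟩ | ⟨hu, hv⟩⟩ := h
  · exact ⟨Bᶜ, hc B hB, hv, not_not_intro hu⟩
  · exact ⟨B, hB, hv, hu⟩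

theorem stmt_2_general {X : Type*} [TopologicalSpace X] [CompactSpace X]
    (𝓜 : Set (Set X)) (hcl : ∀ A ∈ 𝓜, IsClopen A)
    (h0 : ∅ ∈ 𝓜)
    (hu : ∀ A ∈ 𝓜, ∀ B ∈ 𝓜, A ∪ B ∈ 𝓜)
    (hc : ∀ A ∈ 𝓜, Aᶜ ∈ 𝓜) :
    ∃ E : Set (X × X), (∀ p ∈ E, (p.2, p.1) ∈ E) ∧
      ∀ A : Set X, IsClopen A →
        (A ∈ 𝓜 ↔ ∀ p ∈ E, p.1 ∈ A → p.2 ∈ A) := by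
  have hopen : ∀ B ∈ 𝓜, IsOpen B := fun B hB => (hcl B hB).isOpen
  have hsup : SupClosed 𝓜 := fun A hA B hB => hu A hA B hB
  refine ⟨{p | ∀ B ∈ 𝓜, p.1 ∈ B ↔ p.2 ∈ B}, fun p hp B hB => (hp B hB).symm,
    fun A hA => ⟨fun hAM p hp hp1 => (hp A hAM).1 hp1, fun hresp => ?_⟩⟩
  have hlocal : ∀ u ∈ A, ∃ C ∈ 𝓜, u ∈ C ∧ C ⊆ A := by
    intro u huA
    obtain ⟨D, hD, hAD, hDu⟩ := hA.compl.isClosed.isCompact.exists_mem_between_of_supClosed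
      hopen h0 hsup (U := {u}ᶜ) fun v hv => by
        obtain ⟨D, hD, hvD, huD⟩ :=
          exists_mem_separating_of_compl_mem hc fun huv => hv (hresp (u, v) huv huA)
        exact ⟨D, hD, hvD, subset_compl_singleton_iff.2 huD⟩
    exact ⟨Dᶜ, hc D hD, subset_compl_singleton_iff.1 hDu, compl_subset_comm.1 hAD⟩
  obtain ⟨C, hC, hAC, hCA⟩ :=
    hA.isClosed.isCompact.exists_mem_between_of_supClosed hopen h0 hsup hlocal
  exact (hCA.antisymm hAC) ▸ hC

theorem stmt_2 {X : Type*} [TopologicalSpace X] [CompactSpace X]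
    (𝓜 : Set (Set X)) (hcl : ∀ A ∈ 𝓜, IsClopen A)
    (h0 : ∅ ∈ 𝓜) (h1 : Set.univ ∈ 𝓜)
    (hu : ∀ A ∈ 𝓜, ∀ B ∈ 𝓜, A ∪ B ∈ 𝓜)
    (hi : ∀ A ∈ 𝓜, ∀ B ∈ 𝓜, A ∩ B ∈ 𝓜)
    (hc : ∀ A ∈ 𝓜, Aᶜ ∈ 𝓜) :
    ∃ E : Set (X × X), (∀ p ∈ E, (p.2, p.1) ∈ E) ∧
      ∀ A : Set X, IsClopen A →
        (A ∈ 𝓜 ↔ ∀ p ∈ E, p.1 ∈ A → p.2 ∈ A) :=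
  stmt_2_general 𝓜 hcl h0 hu hc
end

section
/- Let X be a compact space with clopen basis and D ⊆ X dense. A family 𝓜 of 'regular' subsets of D (i.e., sets of the form U ∩ D with U clopen in X) contains ∅ and D and is closed under binary unions and intersections if and only if there exists a set E ⊆ X × X such that a regular language L ∈ 𝓜 iff for every (u,v) ∈ E, u ∈ closure(L) implies v ∈ closure(L). -/
/-!
Replacing a regular set `U ∩ D` by its closure `U` identifies the regular subsets of `D` with
the clopen subsets of `X`, and turns "`L` satisfies `(u, v)`" into "`u ∈ U → v ∈ U`". A family
given by equations is then clearly a lattice. Conversely, for a bounded lattice `𝓒` of clopen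
sets take as equations all `(u, v)` that every member of `𝓒` satisfies. If a clopen `U`
satisfies them, then for `u ∈ U` and `v ∉ U` some member of `𝓒` contains `u` but not `v`; by
compactness of `U` finitely many of these give one member containing `U` but not `v`, and by
compactness of `Uᶜ` finitely many of those intersect to `U`.
-/

open Set

section

variable {X : Type*}

def SatisfiesEquations (E : Set (X × X)) (S : Set X) : Prop :=
  ∀ p ∈ E, p.1 ∈ S → p.2 ∈ S

def equationsOf (𝓒 : Set (Set X)) : Set (X × X) :=
  {p | ∀ C ∈ 𝓒, p.1 ∈ C → p.2 ∈ C}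

theorem SatisfiesEquations.union {E : Set (X × X)} {S T : Set X} (hS : SatisfiesEquations E S)
    (hT : SatisfiesEquations E T) : SatisfiesEquations E (S ∪ T) :=
  fun p hp => Or.imp (hS p hp) (hT p hp)

theorem SatisfiesEquations.inter {E : Set (X × X)} {S T : Set X} (hS : SatisfiesEquations E S)
    (hT : SatisfiesEquations E T) : SatisfiesEquations E (S ∩ T) :=
  fun p hp => And.imp (hS p hp) (hT p hp)

theorem satisfiesEquations_equationsOf {𝓒 : Set (Set X)} {C : Set X} (hC : C ∈ 𝓒) :
    SatisfiesEquations (equationsOf 𝓒) C :=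
  fun _ hp => hp C hC

variable [TopologicalSpace X]

theorem Dense.closure_inter_of_isClopen {D U : Set X} (hD : Dense D) (hU : IsClopen U) :
    closure (U ∩ D) = U :=
  (closure_minimal inter_subset_left hU.isClosed).antisymm (hD.open_subset_closure_inter hU.isOpen)

theorem IsCompact.exists_mem_superset_notMem {𝓒 : Set (Set X)} (h𝓒 : ∀ C ∈ 𝓒, IsOpen C)
    (hsup : SupClosed 𝓒) (hempty : ∅ ∈ 𝓒) {K : Set X} (hK : IsCompact K) {v : X}
    (hsep : ∀ u ∈ K, ∃ C ∈ 𝓒, u ∈ C ∧ v ∉ C) : ∃ C ∈ 𝓒, K ⊆ C ∧ v ∉ C := by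
  obtain ⟨b, hb, hb_fin, hKb⟩ := hK.elim_finite_subcover_image (b := {C ∈ 𝓒 | v ∉ C}) (c := id)
    (fun C hC => h𝓒 C hC.1) fun u hu => by
      obtain ⟨C, hC, huC, hvC⟩ := hsep u hu
      exact mem_biUnion ⟨hC, hvC⟩ huC
  refine ⟨⋃₀ b, hsup.sSup_mem hb_fin hempty fun C hC => (hb hC).1, by rwa [sUnion_eq_biUnion], ?_⟩
  rintro ⟨C, hC, hvC⟩
  exact (hb hC).2 hvC

theorem mem_of_isCompact_compl_of_forall_notMem {𝓒 : Set (Set X)} (h𝓒 : ∀ C ∈ 𝓒, IsClosed C)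
    (hinf : InfClosed 𝓒) (huniv : univ ∈ 𝓒) {U : Set X} (hU : IsCompact Uᶜ)
    (hsep : ∀ v ∉ U, ∃ C ∈ 𝓒, U ⊆ C ∧ v ∉ C) : U ∈ 𝓒 := by
  obtain ⟨b, hb, hb_fin, hUb⟩ := hU.elim_finite_subcover_image (b := {C ∈ 𝓒 | U ⊆ C})
    (c := compl) (fun C hC => (h𝓒 C hC.1).isOpen_compl) fun v hv => by
      obtain ⟨C, hC, hUC, hvC⟩ := hsep v hv
      exact mem_biUnion ⟨hC, hUC⟩ hvC
  have hU_eq : ⋂₀ b = U := by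
    refine Subset.antisymm (fun x hx => ?_) fun x hx C hC => (hb hC).2 hx
    by_contra hxU
    obtain ⟨C, hC, hxC⟩ := mem_iUnion₂.1 (hUb hxU)
    exact hxC (hx C hC)
  exact hU_eq ▸ hinf.sInf_mem hb_fin huniv fun C hC => (hb hC).1

theorem mem_iff_satisfiesEquations_equationsOf [CompactSpace X] {𝓒 : Set (Set X)}
    (h𝓒 : ∀ C ∈ 𝓒, IsClopen C) (hempty : ∅ ∈ 𝓒) (huniv : univ ∈ 𝓒) (hsup : SupClosed 𝓒)
    (hinf : InfClosed 𝓒) {U : Set X} (hU : IsClopen U) :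
    U ∈ 𝓒 ↔ SatisfiesEquations (equationsOf 𝓒) U := by
  refine ⟨satisfiesEquations_equationsOf, fun hUE => ?_⟩
  refine mem_of_isCompact_compl_of_forall_notMem (fun C hC => (h𝓒 C hC).isClosed) hinf huniv
    hU.compl.isClosed.isCompact fun v hv => ?_
  refine hU.isClosed.isCompact.exists_mem_superset_notMem (fun C hC => (h𝓒 C hC).isOpen) hsup
    hempty fun u hu => ?_
  by_contra! hsep
  exact hv (hUE (u, v) hsep hu)

end

theorem stmt_11_general {X : Type*} [TopologicalSpace X] [CompactSpace X]
    (D : Set X) (hD : Dense D)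
    (𝓜 : Set (Set X)) (h𝓜 : ∀ L ∈ 𝓜, ∃ U : Set X, IsClopen U ∧ L = U ∩ D) :
    ((∅ ∈ 𝓜 ∧ D ∈ 𝓜 ∧ ∀ A ∈ 𝓜, ∀ B ∈ 𝓜, A ∪ B ∈ 𝓜 ∧ A ∩ B ∈ 𝓜) ↔
      ∃ E : Set (X × X), ∀ L : Set X, (∃ U : Set X, IsClopen U ∧ L = U ∩ D) →
        (L ∈ 𝓜 ↔ ∀ p ∈ E, p.1 ∈ closure L → p.2 ∈ closure L)) := by
  constructor
  · rintro ⟨hempty, hD𝓜, hlat⟩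
    let 𝓒 : Set (Set X) := {U | IsClopen U ∧ U ∩ D ∈ 𝓜}
    have hsup : SupClosed 𝓒 := fun A hA B hB =>
      ⟨hA.1.union hB.1, union_inter_distrib_right A B D ▸ (hlat _ hA.2 _ hB.2).1⟩
    have hinf : InfClosed 𝓒 := fun A hA B hB =>
      ⟨hA.1.inter hB.1, inter_inter_distrib_right A B D ▸ (hlat _ hA.2 _ hB.2).2⟩
    refine ⟨equationsOf 𝓒, ?_⟩
    rintro _ ⟨U, hU, rfl⟩
    rw [hD.closure_inter_of_isClopen hU]
    exact Iff.trans ⟨fun h => ⟨hU, h⟩, And.right⟩ (mem_iff_satisfiesEquations_equationsOf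
      (fun C hC => hC.1) (show ∅ ∈ 𝓒 from ⟨isClopen_empty, by simpa⟩)
      (show univ ∈ 𝓒 from ⟨isClopen_univ, by simpa⟩) hsup hinf hU)
  · rintro ⟨E, hE⟩
    have h𝓜E : ∀ U, IsClopen U → (U ∩ D ∈ 𝓜 ↔ SatisfiesEquations E U) := fun U hU => by
      have h := hE _ ⟨U, hU, rfl⟩
      rwa [hD.closure_inter_of_isClopen hU] at h
    refine ⟨by simpa using (h𝓜E ∅ isClopen_empty).2 fun _ _ => id,
      by simpa using (h𝓜E univ isClopen_univ).2 fun _ _ _ => trivial, fun A hA B hB => ?_⟩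
    obtain ⟨UA, hUA, rfl⟩ := h𝓜 A hA
    obtain ⟨UB, hUB, rfl⟩ := h𝓜 B hB
    rw [h𝓜E UA hUA] at hA
    rw [h𝓜E UB hUB] at hB
    rw [← union_inter_distrib_right, ← inter_inter_distrib_right, h𝓜E _ (hUA.union hUB),
      h𝓜E _ (hUA.inter hUB)]
    exact ⟨hA.union hB, hA.inter hB⟩

theorem stmt_11 {X : Type*} [TopologicalSpace X] [CompactSpace X]
    (hbasis : TopologicalSpace.IsTopologicalBasis {U : Set X | IsClopen U})
    (D : Set X) (hD : Dense D)
    (𝓜 : Set (Set X)) (h𝓜 : ∀ L ∈ 𝓜, ∃ U : Set X, IsClopen U ∧ L = U ∩ D) :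
    ((∅ ∈ 𝓜 ∧ D ∈ 𝓜 ∧ ∀ A ∈ 𝓜, ∀ B ∈ 𝓜, A ∪ B ∈ 𝓜 ∧ A ∩ B ∈ 𝓜) ↔
      ∃ E : Set (X × X), ∀ L : Set X, (∃ U : Set X, IsClopen U ∧ L = U ∩ D) →
        (L ∈ 𝓜 ↔ ∀ p ∈ E, p.1 ∈ closure L → p.2 ∈ closure L)) :=
  stmt_11_general D hD 𝓜 h𝓜
end

section
/- Let X be a compact space with clopen basis and D ⊆ X dense. A family 𝓜 of regular subsets of D (sets U ∩ D with U clopen in X) is a Boolean subalgebra (contains ∅ and D, closed under finite unions, intersections, and complements in D) if and only if there exists a symmetric set E ⊆ X × X such that L ∈ 𝓜 iff for every (u,v) ∈ E, u ∈ closure(L) ↔ v ∈ closure(L). -/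
/-!
For clopen `U` we have `closure (U ∩ D) = U`, so the regular subsets of `D` are exactly the traces
of the clopen subsets of `X`, and the question is about families of clopen sets.

If `𝓜` is a Boolean algebra, the clopen sets `W` with `W ∩ D ∈ 𝓜` form a Boolean subalgebra `𝓑`,
and `E` is taken to be the set of pairs that no member of `𝓑` separates. A clopen `U` separating no
such pair lies in `𝓑` by compactness: for `u ∈ U` the members of `𝓑` avoiding `u` form a directed
open cover of `Uᶜ`, so a single one of them contains `Uᶜ`, and its complement is a member of `𝓑`
between `u` and `U`; the members of `𝓑` inside `U` then form a directed open cover of `U`.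
Conversely, for any `E` the clopen sets separating no pair of `E` are closed under the Boolean
operations, and so are their traces on `D`.
-/

open Set

theorem IsClopen.closure_inter_dense {X : Type*} [TopologicalSpace X] {U D : Set X}
    (hU : IsClopen U) (hD : Dense D) : closure (U ∩ D) = U :=
  (closure_minimal inter_subset_left hU.isClosed).antisymm
    (hD.open_subset_closure_inter hU.isOpen)

theorem IsCompact.exists_mem_superset_of_supClosed {X : Type*} [TopologicalSpace X]
    {K : Set X} (hK : IsCompact K) {𝓕 : Set (Set X)} (hne : 𝓕.Nonempty) (hsup : SupClosed 𝓕)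
    (hopen : ∀ W ∈ 𝓕, IsOpen W) (hcov : K ⊆ ⋃₀ 𝓕) : ∃ W ∈ 𝓕, K ⊆ W := by
  have := hne.to_subtype
  obtain ⟨⟨W, hW⟩, hKW⟩ := hK.elim_directed_cover (fun W : 𝓕 => (W : Set X))
    (fun W => hopen W W.2) (by rwa [← sUnion_eq_iUnion]) hsup.directedOn.directed_val
  exact ⟨W, hW, hKW⟩

namespace BooleanSubalgebra

variable {X : Type*} [TopologicalSpace X] [CompactSpace X] (𝓑 : BooleanSubalgebra (Set X))

theorem mem_of_isClopen_of_separates (h𝓑 : ∀ W ∈ 𝓑, IsClopen W) {U : Set X} (hU : IsClopen U)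
    (hsep : ∀ u ∈ U, ∀ v ∉ U, ∃ W ∈ 𝓑, u ∉ W ∧ v ∈ W) : U ∈ 𝓑 := by
  have hlocal : ∀ u ∈ U, ∃ W ∈ 𝓑, u ∈ W ∧ W ⊆ U := by
    intro u hu
    obtain ⟨V, ⟨hV, huV⟩, hUV⟩ :=
      hU.isOpen.isClosed_compl.isCompact.exists_mem_superset_of_supClosed
        (𝓕 := {V | V ∈ 𝓑 ∧ u ∉ V}) ⟨∅, 𝓑.bot_mem, notMem_empty u⟩
        (fun A ⟨hA, huA⟩ B ⟨hB, huB⟩ => ⟨𝓑.sup_mem hA hB, by simp [huA, huB]⟩)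
        (fun V hV => (h𝓑 V hV.1).isOpen)
        (fun v hv => let ⟨W, hW, huW, hvW⟩ := hsep u hu v hv; ⟨W, ⟨hW, huW⟩, hvW⟩)
    exact ⟨Vᶜ, 𝓑.compl_mem hV, huV, compl_subset_comm.1 hUV⟩
  obtain ⟨W, ⟨hW, hWU⟩, hUW⟩ := hU.isClosed.isCompact.exists_mem_superset_of_supClosed
    (𝓕 := {W | W ∈ 𝓑 ∧ W ⊆ U}) ⟨∅, 𝓑.bot_mem, empty_subset U⟩
    (fun A ⟨hA, hAU⟩ B ⟨hB, hBU⟩ => ⟨𝓑.sup_mem hA hB, union_subset hAU hBU⟩)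
    (fun W hW => (h𝓑 W hW.1).isOpen)
    (fun u hu => let ⟨W, hW, huW, hWU⟩ := hlocal u hu; ⟨W, ⟨hW, hWU⟩, huW⟩)
  rwa [← hWU.antisymm hUW]

theorem isClopen_mem_iff (h𝓑 : ∀ W ∈ 𝓑, IsClopen W) {U : Set X} (hU : IsClopen U) :
    U ∈ 𝓑 ↔ ∀ p : X × X, (∀ W ∈ 𝓑, p.1 ∈ W ↔ p.2 ∈ W) → (p.1 ∈ U ↔ p.2 ∈ U) := by
  refine ⟨fun hU𝓑 p hp => hp U hU𝓑, fun h => 𝓑.mem_of_isClopen_of_separates h𝓑 hU ?_⟩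
  intro u hu v hv
  by_contra! hno
  refine hv ((h (u, v) fun W hW => ⟨fun huW => ?_, fun hvW => ?_⟩).1 hu)
  · by_contra hvW
    exact hno Wᶜ (𝓑.compl_mem hW) (notMem_compl_iff.2 huW) hvW
  · by_contra huW
    exact hno W hW huW hvW

end BooleanSubalgebra

section RegularSets

variable {X : Type*} [TopologicalSpace X] {D : Set X} {𝓜 : Set (Set X)}

theorem exists_symm_isClopen_inter_mem_iff [CompactSpace X] (h0 : ∅ ∈ 𝓜)
    (hops : ∀ A ∈ 𝓜, ∀ B ∈ 𝓜, A ∪ B ∈ 𝓜 ∧ A ∩ B ∈ 𝓜) (hdiff : ∀ A ∈ 𝓜, D \ A ∈ 𝓜) :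
    ∃ E : Set (X × X), (∀ p ∈ E, (p.2, p.1) ∈ E) ∧
      ∀ U, IsClopen U → (U ∩ D ∈ 𝓜 ↔ ∀ p ∈ E, (p.1 ∈ U ↔ p.2 ∈ U)) := by
  let 𝓑 : BooleanSubalgebra (Set X) :=
    { carrier := {W | IsClopen W ∧ W ∩ D ∈ 𝓜}
      supClosed' := fun A ⟨hA, hAD⟩ B ⟨hB, hBD⟩ =>
        ⟨hA.union hB, union_inter_distrib_right A B D ▸ (hops _ hAD _ hBD).1⟩
      infClosed' := fun A ⟨hA, hAD⟩ B ⟨hB, hBD⟩ =>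
        ⟨hA.inter hB, inter_inter_distrib_right A B D ▸ (hops _ hAD _ hBD).2⟩
      compl_mem' := fun {A} ⟨hA, hAD⟩ =>
        ⟨hA.compl, by
          rw [← Set.sdiff_eq_compl_inter, ← Set.sdiff_inter_self_eq_sdiff]; exact hdiff _ hAD⟩
      bot_mem' := ⟨isClopen_empty, by simpa using h0⟩ }
  exact ⟨{p | ∀ W ∈ 𝓑, p.1 ∈ W ↔ p.2 ∈ W}, fun p hp W hW => (hp W hW).symm,
    fun U hU => (and_iff_right hU).symm.trans (𝓑.isClopen_mem_iff (fun W hW => hW.1) hU)⟩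

theorem boolean_of_isClopen_inter_mem_iff {E : Set (X × X)}
    (h𝓜 : ∀ L ∈ 𝓜, ∃ U : Set X, IsClopen U ∧ L = U ∩ D)
    (hE : ∀ U, IsClopen U → (U ∩ D ∈ 𝓜 ↔ ∀ p ∈ E, (p.1 ∈ U ↔ p.2 ∈ U))) :
    ∅ ∈ 𝓜 ∧ D ∈ 𝓜 ∧ (∀ A ∈ 𝓜, ∀ B ∈ 𝓜, A ∪ B ∈ 𝓜 ∧ A ∩ B ∈ 𝓜) ∧ ∀ A ∈ 𝓜, D \ A ∈ 𝓜 := by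
  refine ⟨by simpa using (hE ∅ isClopen_empty).2 (by simp),
    by simpa using (hE univ isClopen_univ).2 (by simp), ?_, ?_⟩
  · intro _ hA _ hB
    obtain ⟨U, hU, rfl⟩ := h𝓜 _ hA
    obtain ⟨V, hV, rfl⟩ := h𝓜 _ hB
    have hUE := (hE U hU).1 hA
    have hVE := (hE V hV).1 hB
    rw [← union_inter_distrib_right, ← inter_inter_distrib_right]
    exact ⟨(hE _ (hU.union hV)).2 fun p hp => by simp [hUE p hp, hVE p hp],
      (hE _ (hU.inter hV)).2 fun p hp => by simp [hUE p hp, hVE p hp]⟩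
  · intro _ hA
    obtain ⟨U, hU, rfl⟩ := h𝓜 _ hA
    have hUE := (hE U hU).1 hA
    rw [Set.sdiff_inter_self_eq_sdiff, Set.sdiff_eq_compl_inter]
    exact (hE _ hU.compl).2 fun p hp => by simp [hUE p hp]

end RegularSets

theorem stmt_12_general {X : Type*} [TopologicalSpace X] [CompactSpace X]
    (D : Set X) (hD : Dense D)
    (𝓜 : Set (Set X)) (h𝓜 : ∀ L ∈ 𝓜, ∃ U : Set X, IsClopen U ∧ L = U ∩ D) :
    ((∅ ∈ 𝓜 ∧ D ∈ 𝓜 ∧ (∀ A ∈ 𝓜, ∀ B ∈ 𝓜, A ∪ B ∈ 𝓜 ∧ A ∩ B ∈ 𝓜) ∧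
        (∀ A ∈ 𝓜, D \ A ∈ 𝓜)) ↔
      ∃ E : Set (X × X), (∀ p ∈ E, (p.2, p.1) ∈ E) ∧
        ∀ L : Set X, (∃ U : Set X, IsClopen U ∧ L = U ∩ D) →
          (L ∈ 𝓜 ↔ ∀ p ∈ E, (p.1 ∈ closure L ↔ p.2 ∈ closure L))) := by
  have hregular : ∀ E : Set (X × X),
      (∀ L : Set X, (∃ U : Set X, IsClopen U ∧ L = U ∩ D) →
        (L ∈ 𝓜 ↔ ∀ p ∈ E, (p.1 ∈ closure L ↔ p.2 ∈ closure L))) ↔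
      ∀ U, IsClopen U → (U ∩ D ∈ 𝓜 ↔ ∀ p ∈ E, (p.1 ∈ U ↔ p.2 ∈ U)) := by
    refine fun E => ⟨fun h U hU => ?_, fun h => ?_⟩
    · simpa only [hU.closure_inter_dense hD] using h _ ⟨U, hU, rfl⟩
    · rintro _ ⟨U, hU, rfl⟩
      simpa only [hU.closure_inter_dense hD] using h U hU
  simp only [hregular]
  exact ⟨fun ⟨h0, _, hops, hdiff⟩ => exists_symm_isClopen_inter_mem_iff h0 hops hdiff,
    fun ⟨_, _, hE⟩ => boolean_of_isClopen_inter_mem_iff h𝓜 hE⟩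

theorem stmt_12 {X : Type*} [TopologicalSpace X] [CompactSpace X]
    (hbasis : TopologicalSpace.IsTopologicalBasis {U : Set X | IsClopen U})
    (D : Set X) (hD : Dense D)
    (𝓜 : Set (Set X)) (h𝓜 : ∀ L ∈ 𝓜, ∃ U : Set X, IsClopen U ∧ L = U ∩ D) :
    ((∅ ∈ 𝓜 ∧ D ∈ 𝓜 ∧ (∀ A ∈ 𝓜, ∀ B ∈ 𝓜, A ∪ B ∈ 𝓜 ∧ A ∩ B ∈ 𝓜) ∧
        (∀ A ∈ 𝓜, D \ A ∈ 𝓜)) ↔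
      ∃ E : Set (X × X), (∀ p ∈ E, (p.2, p.1) ∈ E) ∧
        ∀ L : Set X, (∃ U : Set X, IsClopen U ∧ L = U ∩ D) →
          (L ∈ 𝓜 ↔ ∀ p ∈ E, (p.1 ∈ closure L ↔ p.2 ∈ closure L))) :=
  stmt_12_general D hD 𝓜 h𝓜
end
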